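/- Let f(ζ) = c ζ(ζ−a)/(ζ−b) with 0 < |a| < 1 < |b|, c ≠ 0, and suppose a = 1/b̄. Then f(1/b̄) = 0 = f(0), the two quadrature weights are equal: A = B = |c|²/|b|², and the moments satisfy M_0 = 2|c|²/|b|² and M_k = 0 for all k ≥ 1, where M_k = (1/(2πi)) ∮_{∂D} f(ζ)^k f*(ζ) f'(ζ) dζ. -/

import Mathlib

/-!
With `a = 1 / b̄`, on the unit circle (where `ζ̄ = ζ⁻¹`) the reflected function
`f*(ζ) = conj (f (1 / ζ̄))` is the partial fraction `((ζ - a)⁻¹ - ζ⁻¹) g(ζ)` with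
`g(ζ) = -c̄ (b - ζ) / b` entire. Since `f^k f'` is holomorphic on the closed disc (its only pole
is `b`, outside), Cauchy's formula at `a` and at `0` gives `M_k = H(a) - H(0)` for
`H = f^k f' g`. This vanishes for `k ≥ 1` because `f(a) = f(0) = 0`, and for `k = 0` it equals
`f'(a) g(a) - f'(0) g(0) = 2 |c|² a / b = 2 |c|² / |b|²`.
-/

open Complex Metric
open scoped Real ComplexConjugate

section CauchyDifference

variable {E : Type*} [NormedAddCommGroup E] [NormedSpace ℂ E] {R : ℝ} {c w w₁ w₂ : ℂ} {H : ℂ → E}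

theorem DifferentiableOn.circleIntegrable_sub_inv_smul
    (hd : DifferentiableOn ℂ H (closedBall c R)) (hw : w ∈ ball c R) :
    CircleIntegrable (fun z => (z - w)⁻¹ • H z) c R := by
  refine ContinuousOn.circleIntegrable (dist_nonneg.trans (mem_ball.1 hw).le) <|
    (continuousOn_id.sub (continuousOn_const (c := w))).inv₀ (fun z hz h => ?_) |>.smul
      (hd.continuousOn.mono sphere_subset_closedBall)
  rw [show z = w from sub_eq_zero.1 h] at hz
  exact (mem_ball.1 hw).ne (mem_sphere.1 hz)

theorem DifferentiableOn.circleIntegral_sub_inv_sub_sub_inv_smul [CompleteSpace E]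
    (hd : DifferentiableOn ℂ H (closedBall c R)) (hw₁ : w₁ ∈ ball c R) (hw₂ : w₂ ∈ ball c R) :
    (∮ z in C(c, R), ((z - w₁)⁻¹ - (z - w₂)⁻¹) • H z) = (2 * π * I : ℂ) • (H w₁ - H w₂) := by
  simp_rw [sub_smul]
  rw [circleIntegral.integral_sub (hd.circleIntegrable_sub_inv_smul hw₁)
    (hd.circleIntegrable_sub_inv_smul hw₂), hd.circleIntegral_sub_inv_smul hw₁,
    hd.circleIntegral_sub_inv_smul hw₂, smul_sub]

end CauchyDifference

theorem hasDerivAt_mul_sub_div_sub {a b c z : ℂ} (hz : z ≠ b) :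
    HasDerivAt (fun ζ => c * ζ * (ζ - a) / (ζ - b))
      (c * ((2 * z - a) * (z - b) - z * (z - a)) / (z - b) ^ 2) z := by
  have hnum : HasDerivAt (fun ζ => c * ζ * (ζ - a)) (c * (2 * z - a)) z :=
    (((hasDerivAt_id' z).const_mul c).mul ((hasDerivAt_id' z).sub_const a)).congr_deriv
      (by ring)
  exact (hnum.div ((hasDerivAt_id' z).sub_const b) (sub_ne_zero.2 hz)).congr_deriv (by ring)

theorem conj_mul_sub_div_sub_of_mul_conj_eq_one {a b c ζ : ℂ} (hab : a * conj b = 1)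
    (hζ : ζ * conj ζ = 1) (hζa : ζ ≠ a) :
    conj (c * ζ * (ζ - a) / (ζ - b)) = ((ζ - a)⁻¹ - ζ⁻¹) * (-conj c * (b - ζ) / b) := by
  have ha0 : a ≠ 0 := left_ne_zero_of_mul_eq_one hab
  have hb0 : b ≠ 0 := by simpa using right_ne_zero_of_mul_eq_one hab
  have hζ0 : ζ ≠ 0 := left_ne_zero_of_mul_eq_one hζ
  have hconjζ : conj ζ = ζ⁻¹ := eq_inv_of_mul_eq_one_right hζ
  have hconjb : conj b = a⁻¹ := eq_inv_of_mul_eq_one_right hab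
  have hconja : conj a = b⁻¹ := eq_inv_of_mul_eq_one_left (by simpa using congrArg conj hab)
  have hζa' : ζ⁻¹ - a⁻¹ ≠ 0 := sub_ne_zero.2 (inv_injective.ne hζa)
  simp only [map_div₀, map_mul, map_sub, hconjζ, hconja, hconjb]
  field_simp [sub_ne_zero.2 hζa]
  ring

theorem circleIntegral_mul_conj_reflection_eq {a b c : ℂ} (hab : a * conj b = 1) (ha : ‖a‖ < 1)
    (f : ℂ → ℂ) (hf : f = fun ζ => c * ζ * (ζ - a) / (ζ - b)) {F : ℂ → ℂ}
    (hF : DifferentiableOn ℂ F (closedBall 0 1)) :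
    (∮ ζ in C(0, 1), F ζ * conj (f (1 / conj ζ))) =
      2 * π * I * (F a * (-conj c * (b - a) / b) - F 0 * -conj c) := by
  have hFg : DifferentiableOn ℂ (fun ζ => F ζ * (-conj c * (b - ζ) / b)) (closedBall 0 1) :=
    hF.mul (by fun_prop)
  have hb0 : b ≠ 0 := by simpa using right_ne_zero_of_mul_eq_one hab
  subst hf
  calc _ = ∮ ζ in C(0, 1), ((ζ - a)⁻¹ - (ζ - 0)⁻¹) • (F ζ * (-conj c * (b - ζ) / b)) := by
        refine circleIntegral.integral_congr zero_le_one fun ζ hζ => ?_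
        have hζ1 : ‖ζ‖ = 1 := by simpa using hζ
        have hζ : ζ * conj ζ = 1 := by rw [mul_conj', hζ1]; norm_num
        have hζa : ζ ≠ a := fun h => ha.ne (h ▸ hζ1)
        rw [one_div, ← eq_inv_of_mul_eq_one_left hζ,
          conj_mul_sub_div_sub_of_mul_conj_eq_one hab hζ hζa, smul_eq_mul, sub_zero]
        ring
    _ = _ := by
        rw [hFg.circleIntegral_sub_inv_sub_sub_inv_smul (mem_ball_zero_iff.2 ha)
          (mem_ball_self one_pos), smul_eq_mul, sub_zero, mul_div_cancel_right₀ _ hb0]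

theorem two_pi_I_inv_mul_circleIntegral_pow_mul_conj_reflection_mul_deriv {a b c : ℂ}
    (hab : a * conj b = 1) (ha : ‖a‖ < 1) (hb : 1 < ‖b‖)
    (f : ℂ → ℂ) (hf : f = fun ζ => c * ζ * (ζ - a) / (ζ - b)) (k : ℕ) :
    (2 * π * I)⁻¹ * ∮ ζ in C(0, 1), f ζ ^ k * conj (f (1 / conj ζ)) * deriv f ζ =
      f a ^ k * deriv f a * (-conj c * (b - a) / b) - f 0 ^ k * deriv f 0 * -conj c := by
  have hdiff : DifferentiableOn ℂ f {b}ᶜ := hf ▸ fun z hz =>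
    (hasDerivAt_mul_sub_div_sub hz).differentiableAt.differentiableWithinAt
  have hball : closedBall (0 : ℂ) 1 ⊆ {b}ᶜ := fun z hz (h : z = b) =>
    (h ▸ hb).not_ge (mem_closedBall_zero_iff.1 hz)
  rw [circleIntegral.integral_congr zero_le_one fun ζ _ => mul_right_comm _ _ _,
    circleIntegral_mul_conj_reflection_eq hab ha f hf (F := fun ζ => f ζ ^ k * deriv f ζ)
      (((hdiff.pow k).mul (hdiff.deriv isOpen_compl_singleton)).mono hball),
    inv_mul_cancel_left₀ (by simp [Real.pi_ne_zero])]

theorem stmt_7_general (a b c : ℂ)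
    (hb : 1 < ‖b‖)
    (hab : a = 1 / (starRingEnd ℂ) b)
    (f : ℂ → ℂ) (hf : f = fun ζ => c * ζ * (ζ - a) / (ζ - b)) :
    f (1 / (starRingEnd ℂ) b) = 0 ∧ f 0 = 0 ∧
    (((‖c‖ : ℝ) : ℂ) ^ 2 * a / b) = ((‖c‖ : ℝ) : ℂ) ^ 2 / ((‖b‖ : ℝ) : ℂ) ^ 2 ∧
    (((‖c‖ : ℝ) : ℂ) ^ 2 *
        (((starRingEnd ℂ) a - (starRingEnd ℂ) b) *
          (1 - 2 * ((‖b‖ : ℝ) : ℂ) ^ 2 + a * (starRingEnd ℂ) b * ((‖b‖ : ℝ) : ℂ) ^ 2)) /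
        ((starRingEnd ℂ) b * (1 - ((‖b‖ : ℝ) : ℂ) ^ 2) ^ 2)) =
      ((‖c‖ : ℝ) : ℂ) ^ 2 / ((‖b‖ : ℝ) : ℂ) ^ 2 ∧
    ((2 * π * Complex.I)⁻¹ *
        ∮ ζ in C(0, 1), f ζ ^ (0 : ℕ) * (starRingEnd ℂ) (f (1 / (starRingEnd ℂ) ζ)) * deriv f ζ) =
      2 * ((‖c‖ : ℝ) : ℂ) ^ 2 / ((‖b‖ : ℝ) : ℂ) ^ 2 ∧
    (∀ k : ℕ, 1 ≤ k →
      ((2 * π * Complex.I)⁻¹ *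
          ∮ ζ in C(0, 1), f ζ ^ k * (starRingEnd ℂ) (f (1 / (starRingEnd ℂ) ζ)) * deriv f ζ) = 0) := by
  have hb0 : b ≠ 0 := norm_pos_iff.1 (one_pos.trans hb)
  have hab' : a * conj b = 1 := by rw [hab, one_div, inv_mul_cancel₀ ((map_ne_zero _).2 hb0)]
  have ha : ‖a‖ < 1 := by
    rw [hab, norm_div, norm_one, Complex.norm_conj]; exact (div_lt_one (one_pos.trans hb)).2 hb
  have hab_ne : a ≠ b := fun h => (ha.trans hb).ne (congrArg norm h)
  have hmoment := two_pi_I_inv_mul_circleIntegral_pow_mul_conj_reflection_mul_deriv hab' ha hb f hf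
  have hfa : f a = 0 := by simp [hf]
  have hf0 : f 0 = 0 := by simp [hf]
  have hderiv_a : deriv f a = c * a / (a - b) := by
    rw [hf, (hasDerivAt_mul_sub_div_sub hab_ne).deriv]; field_simp [sub_ne_zero.2 hab_ne]; ring
  have hderiv_0 : deriv f 0 = c * a / b := by
    rw [hf, (hasDerivAt_mul_sub_div_sub hb0.symm).deriv]; field_simp; ring
  have hconjb : conj b = ((‖b‖ : ℝ) : ℂ) ^ 2 / b := by
    rw [← mul_conj', mul_div_cancel_left₀ _ hb0]
  have hnb1 : 1 - ((‖b‖ : ℝ) : ℂ) ^ 2 ≠ 0 := by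
    exact_mod_cast (sub_neg.2 (one_lt_pow₀ hb two_ne_zero)).ne
  refine ⟨hab ▸ hfa, hf0, ?_, ?_, ?_, fun k hk => ?_⟩
  · rw [hab, hconjb]
    field_simp
  · rw [show conj a = 1 / b by simp [hab], hab, hconjb]
    field_simp
    ring
  · rw [hmoment, hderiv_a, hderiv_0, ← mul_conj' c]
    field_simp [sub_ne_zero.2 hab_ne]
    rw [hab, hconjb]
    field_simp
    ring
  · rw [hmoment, hfa, hf0, zero_pow (by omega)]
    ring

/-- first subcase `a = 1/b̄`: then `f(1/b̄) = 0 = f(0)`, the two quadrature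
weights agree, `A = B = |c|²/|b|²`, and the moments
`M_k = (1/(2πi)) ∮_{∂D} f^k f* f' dζ` satisfy `M₀ = 2|c|²/|b|²` and `M_k = 0` for `k ≥ 1`. -/
theorem stmt_7 (a b c : ℂ) (ha : 0 < ‖a‖) (ha1 : ‖a‖ < 1)
    (hb : 1 < ‖b‖) (hc : c ≠ 0)
    (hab : a = 1 / (starRingEnd ℂ) b)
    (f : ℂ → ℂ) (hf : f = fun ζ => c * ζ * (ζ - a) / (ζ - b)) :
    f (1 / (starRingEnd ℂ) b) = 0 ∧ f 0 = 0 ∧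
    (((‖c‖ : ℝ) : ℂ) ^ 2 * a / b) = ((‖c‖ : ℝ) : ℂ) ^ 2 / ((‖b‖ : ℝ) : ℂ) ^ 2 ∧
    (((‖c‖ : ℝ) : ℂ) ^ 2 *
        (((starRingEnd ℂ) a - (starRingEnd ℂ) b) *
          (1 - 2 * ((‖b‖ : ℝ) : ℂ) ^ 2 + a * (starRingEnd ℂ) b * ((‖b‖ : ℝ) : ℂ) ^ 2)) /
        ((starRingEnd ℂ) b * (1 - ((‖b‖ : ℝ) : ℂ) ^ 2) ^ 2)) =
      ((‖c‖ : ℝ) : ℂ) ^ 2 / ((‖b‖ : ℝ) : ℂ) ^ 2 ∧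
    ((2 * π * Complex.I)⁻¹ *
        ∮ ζ in C(0, 1), f ζ ^ (0 : ℕ) * (starRingEnd ℂ) (f (1 / (starRingEnd ℂ) ζ)) * deriv f ζ) =
      2 * ((‖c‖ : ℝ) : ℂ) ^ 2 / ((‖b‖ : ℝ) : ℂ) ^ 2 ∧
    (∀ k : ℕ, 1 ≤ k →
      ((2 * π * Complex.I)⁻¹ *
          ∮ ζ in C(0, 1), f ζ ^ k * (starRingEnd ℂ) (f (1 / (starRingEnd ℂ) ζ)) * deriv f ζ) = 0) :=
  stmt_7_general a b c hb hab f hf
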